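/- There exists a finite constant C such that for every λ > 0, ∫₀¹ (λ + v²)/(v² + (λ + v²)²) dv ≤ C. -/

import Mathlib

/-!
Splitting the numerator, `λ / (v² + (λ + v²)²) ≤ λ / (λ² + v²)` and `v² / (v² + (λ + v²)²) ≤ 1`.
The first bound is a rescaled Cauchy kernel, whose integral over `[0, 1]` is `arctan (1 / λ) < π / 2`
uniformly in `λ`.
-/

open MeasureTheory Real

lemma div_sq_add_sq_le_div_sq_add_sq_add_one {lam : ℝ} (hlam : 0 < lam) (v : ℝ) :
    (lam + v ^ 2) / (v ^ 2 + (lam + v ^ 2) ^ 2) ≤ lam / (lam ^ 2 + v ^ 2) + 1 := by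
  rw [add_div]
  gcongr ?_ + ?_
  · exact div_le_div_of_nonneg_left hlam.le (by positivity)
      (by nlinarith [sq_nonneg (v ^ 2), mul_nonneg hlam.le (sq_nonneg v)])
  · exact div_le_one_of_le₀ (by nlinarith [sq_nonneg (lam + v ^ 2)]) (by positivity)

lemma setIntegral_Icc_le_arctan_add_one {lam : ℝ} (hlam : 0 < lam) :
    ∫ v in Set.Icc (0 : ℝ) 1, (lam + v ^ 2) / (v ^ 2 + (lam + v ^ 2) ^ 2) ≤
      arctan (1 / lam) + 1 := by
  have hg : Continuous fun v : ℝ => lam / (lam ^ 2 + v ^ 2) :=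
    continuous_const.div (by fun_prop) fun v => by positivity
  have hg1 : Continuous fun v : ℝ => lam / (lam ^ 2 + v ^ 2) + 1 := hg.add continuous_const
  calc ∫ v in Set.Icc (0 : ℝ) 1, (lam + v ^ 2) / (v ^ 2 + (lam + v ^ 2) ^ 2)
      ≤ ∫ v in Set.Icc (0 : ℝ) 1, (lam / (lam ^ 2 + v ^ 2) + 1) :=
        integral_mono_of_nonneg (.of_forall fun v => by positivity)
          hg1.integrableOn_Icc
          (.of_forall (div_sq_add_sq_le_div_sq_add_sq_add_one hlam))
    _ = arctan (1 / lam) + 1 := by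
      rw [integral_Icc_eq_integral_Ioc, ← intervalIntegral.integral_of_le zero_le_one,
        intervalIntegral.integral_add (hg.intervalIntegrable 0 1) intervalIntegrable_const,
        integral_div_sq_add_sq]
      simp

theorem stmt_8 :
    ∃ C : ℝ, ∀ lam : ℝ, 0 < lam →
      ∫ v in Set.Icc (0 : ℝ) 1, (lam + v ^ 2) / (v ^ 2 + (lam + v ^ 2) ^ 2) ≤ C :=
  ⟨π / 2 + 1, fun _ hlam =>
    (setIntegral_Icc_le_arctan_add_one hlam).trans (by gcongr; exact (arctan_lt_pi_div_two _).le)⟩
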